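/- arXiv:1101.2731 — 3 statements merged into one kernel-verified Lean document; each statement's English description precedes it below -/
import Mathlib

section
/- Let n ≥ 2 and let i satisfy 1 ≤ i ≤ n−1. Then the simple centralizer of the generator x_i in SB_n is exactly the set of simple braids not divisible by the neighbouring generators: C_n(x_i) = {β ∈ SB_n : for every j ≥ 1 with |j − i| = 1, x_j does not divide β}. -/
/-- The defining relations of the positive braid monoid `MB_∞` on generators
`x i`, `i : ℕ+`: the braid relations and the far-commutation relations. -/
def BraidRel : FreeMonoid ℕ+ → FreeMonoid ℕ+ → Prop := fun a b =>
  (∃ i : ℕ+, a = FreeMonoid.of (i + 1) * FreeMonoid.of i * FreeMonoid.of (i + 1) ∧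
      b = FreeMonoid.of i * FreeMonoid.of (i + 1) * FreeMonoid.of i) ∨
  (∃ i j : ℕ+, i + 2 ≤ j ∧ a = FreeMonoid.of i * FreeMonoid.of j ∧
      b = FreeMonoid.of j * FreeMonoid.of i)

/-- The congruence generated by the braid relations. -/
def braidCon : Con (FreeMonoid ℕ+) := conGen BraidRel

/-- The positive braid monoid `MB_∞`. -/
abbrev MB : Type := braidCon.Quotient

/-- The generator `x_i` of `MB_∞`, for `i : ℕ+`. -/
def braidGen (i : ℕ+) : MB := braidCon.mk' (FreeMonoid.of i)

/-- The generator `x_i` of `MB_∞`, indexed by a natural number `i ≥ 1`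
(junk value `x_1` for `i = 0`). -/
def X (i : ℕ) : MB := braidGen ⟨max i 1, lt_of_lt_of_le one_pos (le_max_right i 1)⟩

/-- `x_i` divides `β`: `β = δ * x_i * ε` for some `δ ε ∈ MB_∞`. -/
def GenDvd (i : ℕ) (β : MB) : Prop := ∃ δ ε : MB, β = δ * X i * ε

/-- `x_i` left-divides `β`: `β = x_i * ε` for some `ε ∈ MB_∞`. -/
def GenDvdL (i : ℕ) (β : MB) : Prop := ∃ ε : MB, β = X i * ε

/-- `x_i` right-divides `β`: `β = δ * x_i` for some `δ ∈ MB_∞`. -/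
def GenDvdR (i : ℕ) (β : MB) : Prop := ∃ δ : MB, β = δ * X i

/-- The set `SB_n` of simple braids in `MB_n`: products of words in the
generators `x_1, …, x_{n-1}` in which each generator appears at most once. -/
def SB (n : ℕ) : Set MB :=
  {β | ∃ w : List ℕ, w.Nodup ∧ (∀ i ∈ w, 1 ≤ i ∧ i < n) ∧ β = (w.map X).prod}

/-- The simple centralizer `C_n(β)` of `β` in `SB_n`. -/
def C (n : ℕ) (β : MB) : Set MB := {γ ∈ SB n | β * γ = γ * β}

/-- `c_n(β)`, the cardinality of the simple centralizer `C_n(β)`. -/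
noncomputable def c (n : ℕ) (β : MB) : ℕ := (C n β).ncard

/-!
Write a simple braid as `β = x_{w₁} ⋯ x_{wₘ}` with `w` free of repetitions. If no letter of `w`
is adjacent to `i`, far commutation lets `x_i` pass through `β`. Conversely, if `x_j` divides `β`
for some `j = i ± 1`, then `j` is a letter of `w`, since the braid relations preserve the set of
letters. Under `x_k ↦ (k, k+1)` a braid commuting with `x_i` maps to a permutation stabilising
`{i, i+1}`; but in a product of distinct adjacent transpositions containing `(i+1, i+2)`
(resp. `(i-1, i)`), all other factors preserve `[0, i+1]` (resp. `[i, ∞)`), and that factor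
then carries a point of `{i, i+1}` out of the pair.
-/

lemma Equiv.Perm.apply_eq_and_or_of_commute_swap {α : Type*} [DecidableEq α] {σ : Equiv.Perm α}
    {a b : α} (hab : a ≠ b) (h : Commute σ (Equiv.swap a b)) :
    (σ a = a ∧ σ b = b) ∨ (σ a = b ∧ σ b = a) := by
  have hσb : Equiv.swap a b (σ a) = σ b := by
    simpa using (congrArg (· a) h.eq).symm
  by_cases ha : σ a = a
  · exact .inl ⟨ha, by rw [← hσb, ha, Equiv.swap_apply_left]⟩
  by_cases hb : σ a = b
  · exact .inr ⟨hb, by rw [← hσb, hb, Equiv.swap_apply_right]⟩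
  rw [Equiv.swap_apply_of_ne_of_ne ha hb] at hσb
  exact absurd (σ.injective hσb) hab

def adjSwap (k : ℕ) : Equiv.Perm ℕ := Equiv.swap k (k + 1)

lemma adjSwap_apply (k p : ℕ) :
    adjSwap k p = if p = k then k + 1 else if p = k + 1 then k else p :=
  Equiv.swap_apply_def k (k + 1) p

lemma adjSwap_le_iff {k m p : ℕ} (hk : k ≠ m) : adjSwap k p ≤ m ↔ p ≤ m := by
  rw [adjSwap_apply]
  split_ifs <;> omega

lemma list_prod_adjSwap_le_iff {m : ℕ} {w : List ℕ} (hm : m ∉ w) (p : ℕ) :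
    (w.map adjSwap).prod p ≤ m ↔ p ≤ m := by
  induction w with
  | nil => rfl
  | cons k t ih =>
    rw [List.mem_cons, not_or] at hm
    rw [List.map_cons, List.prod_cons, Equiv.Perm.mul_apply, adjSwap_le_iff (Ne.symm hm.1), ih hm.2]

lemma list_prod_adjSwap_not_stabilizes {w : List ℕ} (hw : w.Nodup) {i j : ℕ} (hj : j ∈ w)
    (hadj : j = i + 1 ∨ j + 1 = i) :
    ¬ (((w.map adjSwap).prod i = i ∧ (w.map adjSwap).prod (i + 1) = i + 1) ∨
      ((w.map adjSwap).prod i = i + 1 ∧ (w.map adjSwap).prod (i + 1) = i)) := by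
  induction w with
  | nil => simp at hj
  | cons k t ih =>
    obtain ⟨hkt, ht⟩ := List.nodup_cons.mp hw
    simp only [List.map_cons, List.prod_cons, Equiv.Perm.mul_apply, adjSwap_apply]
    by_cases hk : k = i + 1
    · subst hk
      have h₁ := (list_prod_adjSwap_le_iff hkt i).2 (by omega)
      have h₂ := (list_prod_adjSwap_le_iff hkt (i + 1)).2 le_rfl
      split_ifs <;> omega
    by_cases hk' : k + 1 = i
    · subst hk'
      have h₁ := (list_prod_adjSwap_le_iff hkt (k + 1)).not.2 (by omega)
      have h₂ := (list_prod_adjSwap_le_iff hkt (k + 1 + 1)).not.2 (by omega)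
      split_ifs <;> omega
    have := ih ht ((List.mem_cons.mp hj).resolve_left (by omega))
    split_ifs <;> omega

namespace MB

lemma X_eq_mk {i : ℕ} (hi : 1 ≤ i) : X i = braidCon.mk' (FreeMonoid.of (i.toPNat hi)) := by
  unfold X braidGen
  congr
  exact max_eq_left hi

section Lift

variable {M : Type*} [Monoid M] (f : ℕ → M)

lemma braidCon_le_ker
    (h_braid : ∀ i, 1 ≤ i → f (i + 1) * f i * f (i + 1) = f i * f (i + 1) * f i)
    (h_comm : ∀ i j, 1 ≤ i → i + 2 ≤ j → f i * f j = f j * f i) :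
    braidCon ≤ Con.ker (FreeMonoid.lift fun k : ℕ+ => f k) := by
  refine Con.conGen_le.mpr ?_
  rintro a b (⟨i, rfl, rfl⟩ | ⟨i, j, hij, rfl, rfl⟩) <;> rw [Con.ker_rel] <;>
    simp only [map_mul, FreeMonoid.lift_eval_of, PNat.add_coe, PNat.one_coe]
  · exact h_braid i i.pos
  · exact h_comm i j i.pos (by exact_mod_cast hij)

variable (h_braid : ∀ i, 1 ≤ i → f (i + 1) * f i * f (i + 1) = f i * f (i + 1) * f i)
  (h_comm : ∀ i j, 1 ≤ i → i + 2 ≤ j → f i * f j = f j * f i)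

def lift : MB →* M := braidCon.lift _ (braidCon_le_ker f h_braid h_comm)

lemma lift_X {i : ℕ} (hi : 1 ≤ i) : lift f h_braid h_comm (X i) = f i := by
  rw [X_eq_mk hi, lift, Con.lift_mk', FreeMonoid.lift_eval_of]
  rfl

lemma lift_list_prod {w : List ℕ} (hw : ∀ k ∈ w, 1 ≤ k) :
    lift f h_braid h_comm (w.map X).prod = (w.map f).prod := by
  rw [map_list_prod, List.map_map]
  exact congrArg List.prod <| List.map_congr_left fun k hk => lift_X f h_braid h_comm (hw k hk)

end Lift

def toPerm : MB →* Equiv.Perm ℕ :=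
  lift adjSwap
    (fun i _ => by ext p; simp only [Equiv.Perm.mul_apply, adjSwap_apply]; split_ifs <;> omega)
    (fun i j _ _ => by ext p; simp only [Equiv.Perm.mul_apply, adjSwap_apply]; split_ifs <;> omega)

lemma toPerm_list_prod {w : List ℕ} (hw : ∀ k ∈ w, 1 ≤ k) :
    toPerm (w.map X).prod = (w.map adjSwap).prod :=
  lift_list_prod _ _ _ hw

lemma toPerm_X {i : ℕ} (hi : 1 ≤ i) : toPerm (X i) = adjSwap i :=
  lift_X _ _ _ hi

/-- `0` if `x_j` occurs in a word representing the braid, `1` otherwise: the braid relations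
preserve the set of letters of a word. -/
def avoids (j : ℕ) : MB →* ℕ :=
  lift (fun k => if k = j then 0 else 1)
    (fun i _ => by split_ifs <;> simp)
    (fun i k _ _ => mul_comm _ _)

lemma avoids_X {i j : ℕ} (hi : 1 ≤ i) : avoids j (X i) = if i = j then 0 else 1 :=
  lift_X _ _ _ hi

lemma mem_of_genDvd_list_prod {j : ℕ} {w : List ℕ} (hj : 1 ≤ j) (hw : ∀ k ∈ w, 1 ≤ k)
    (h : GenDvd j (w.map X).prod) : j ∈ w := by
  by_contra hjw
  obtain ⟨δ, ε, hδε⟩ := h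
  have h0 : avoids j (w.map X).prod = 0 := by simp [hδε, avoids_X hj]
  have h1 : avoids j (w.map X).prod = 1 := by
    rw [avoids, lift_list_prod _ _ _ hw]
    exact List.prod_eq_one fun x hx => by
      obtain ⟨k, hk, rfl⟩ := List.mem_map.mp hx
      exact if_neg (ne_of_mem_of_not_mem hk hjw)
  omega

lemma genDvd_list_prod_of_mem {j : ℕ} {w : List ℕ} (hj : j ∈ w) : GenDvd j (w.map X).prod := by
  obtain ⟨s, t, rfl⟩ := List.append_of_mem hj
  exact ⟨(s.map X).prod, (t.map X).prod, by simp [List.prod_append, mul_assoc]⟩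

lemma commute_X_X {i k : ℕ} (hi : 1 ≤ i) (hik : i + 2 ≤ k) : Commute (X i) (X k) := by
  rw [X_eq_mk hi, X_eq_mk (by omega : 1 ≤ k), Commute, SemiconjBy, ← map_mul, ← map_mul]
  refine (Con.eq _).mpr <| ConGen.Rel.of _ _ <| Or.inr ⟨_, _, ?_, rfl, rfl⟩
  rw [← PNat.coe_le_coe]
  exact hik

lemma commute_X_X_of_not_adjacent {i k : ℕ} (hi : 1 ≤ i) (hk : 1 ≤ k) (hki : k ≠ i + 1)
    (hik : i ≠ k + 1) : Commute (X i) (X k) := by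
  rcases lt_trichotomy i k with h | rfl | h
  · exact commute_X_X hi (by omega)
  · exact Commute.refl _
  · exact (commute_X_X hk (by omega)).symm

end MB

theorem simple_centralizer_of_generator_general (n : ℕ) (i : ℕ) (hi1 : 1 ≤ i) :
    C n (X i) =
      {β ∈ SB n | ∀ j : ℕ, 1 ≤ j → (j = i + 1 ∨ i = j + 1) → ¬ GenDvd j β} := by
  ext β
  refine and_congr_right fun ⟨w, hw, hbd, hβ⟩ => ?_
  subst hβ
  have hw1 : ∀ k ∈ w, 1 ≤ k := fun k hk => (hbd k hk).1
  constructor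
  · intro hcomm j hj hadj hdvd
    have hσ : Commute (w.map adjSwap).prod (adjSwap i) := by
      simpa only [MB.toPerm_X hi1, MB.toPerm_list_prod hw1] using (Commute.map hcomm MB.toPerm).symm
    exact list_prod_adjSwap_not_stabilizes hw (MB.mem_of_genDvd_list_prod hj hw1 hdvd) (by omega)
      (Equiv.Perm.apply_eq_and_or_of_commute_swap (by omega) hσ)
  · intro hno
    refine Commute.list_prod_right _ _ fun x hx => ?_
    obtain ⟨k, hk, rfl⟩ := List.mem_map.mp hx
    have hk1 := hw1 k hk
    have hnadj := fun hadj => hno k hk1 hadj (MB.genDvd_list_prod_of_mem hk)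
    exact MB.commute_X_X_of_not_adjacent hi1 hk1 (by tauto) (by tauto)

/-- Theorem 1.2: for `1 ≤ i ≤ n-1`, the simple centralizer of the generator
`x_i` in `SB_n` consists exactly of the simple braids not divisible by the
neighbouring generators `x_j`, `|j - i| = 1`. -/
theorem simple_centralizer_of_generator (n : ℕ) (hn : 2 ≤ n) (i : ℕ) (hi1 : 1 ≤ i)
    (hi2 : i ≤ n - 1) :
    C n (X i) =
      {β ∈ SB n | ∀ j : ℕ, 1 ≤ j → (j = i + 1 ∨ i = j + 1) → ¬ GenDvd j β} :=
  simple_centralizer_of_generator_general n i hi1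
end

section
/- Let n ≥ 2 and let β ∈ SB_n with x_{n−1} | β. Then for all m ≥ 1, c_{n+m}(β) = c_n(β) · F_{2m−1}. -/
/-!
A simple braid is `ofWord w` for a word `w` without repeated letters. Under the permutation
representation `x_i ↦ (i i+1)`, the braid `β` fixes every point above `n` but moves `n`, since it
contains `x_{n-1}`; a simple braid containing `x_n` sends `n` above `n` (or its inverse does), so it
cannot commute with `β`. Hence every `γ ∈ C_{n+m}(β)` splits as `γ₁ γ₂` with `γ₁` in the
generators below `n` and `γ₂` in those above `n`. The homomorphism `splitAt n` to
`WithZero (MB × MB)`, which kills `x_n`, recovers `(γ₁, γ₂)` from `γ₁ γ₂` and shows `γ₁ ∈ C_n(β)`,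
so `C_{n+m}(β) ≃ C_n(β) × {simple braids in x_{n+1}, …, x_{n+m-1}}`.

The simple braids in `x_a, …, x_t` are those in `x_a, …, x_{t-1}`, their products `δ x_t`, and
the products `x_t δ` with `δ` containing `x_{t-1}`; the value of `(perm γ)⁻¹ (t + 1)` (`t + 1`,
`t`, or below `t`) tells the three kinds apart and makes `perm` injective on simple braids. Their
number `f k` on `k` consecutive generators thus satisfies `f (k + 1) + f (k - 1) = 3 f k`, so
`f k = F_{2k+1}`.
-/

open Equiv
open scoped Pointwise

lemma apply_mem_of_mem_fixingSubgroup_compl {α : Type*} {s : Set α} {g : Perm α}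
    (hg : g ∈ fixingSubgroup (Perm α) sᶜ) {x : α} (hx : x ∈ s) : g x ∈ s := by
  by_contra h
  have hgx : g (g x) = g x := (mem_fixingSubgroup_iff _).mp hg _ h
  rw [g.injective hgx] at h
  exact h hx

lemma not_commute_of_lt_apply {b g : Perm ℕ} {n : ℕ} (hb : ∀ x, n < x → b x = x)
    (hbn : b n ≠ n) (hg : n < g n) : ¬ Commute b g := fun h => by
  have := congrArg (· n) h.eq
  simp only [Perm.mul_apply, hb _ hg] at this
  exact hbn (g.injective this).symm

lemma lt_mul_swap_mul_apply {n : ℕ} {p q : Perm ℕ}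
    (hp : p ∈ MulAction.stabilizer (Perm ℕ) (Set.Iic n)) (hq : q n = n) :
    n < (p * swap n (n + 1) * q) n := by
  have := (MulAction.mem_stabilizer_set.mp hp (n + 1)).not
  simp only [Set.mem_Iic, not_le, Perm.smul_def] at this
  simpa [hq] using this.mpr (Nat.lt_succ_self n)

lemma X_eq_braidGen (i : ℕ+) : X i = braidGen i := by
  rw [X]; congr; exact max_eq_left i.pos

lemma X_braid {i : ℕ} (hi : 1 ≤ i) : X (i + 1) * X i * X (i + 1) = X i * X (i + 1) * X i := by
  lift i to ℕ+ using hi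
  rw [show (i : ℕ) + 1 = ((i + 1 : ℕ+) : ℕ) from rfl, X_eq_braidGen, X_eq_braidGen]
  simp only [braidGen, ← map_mul]
  exact braidCon.eq.mpr (ConGen.Rel.of _ _ (Or.inl ⟨i, rfl, rfl⟩))

lemma X_comm {i j : ℕ} (hi : 1 ≤ i) (hij : i + 2 ≤ j) : Commute (X i) (X j) := by
  lift i to ℕ+ using hi
  lift j to ℕ+ using (by omega)
  rw [Commute, SemiconjBy, X_eq_braidGen, X_eq_braidGen]
  simp only [braidGen, ← map_mul]
  exact braidCon.eq.mpr (ConGen.Rel.of _ _ (Or.inr ⟨i, j, by exact_mod_cast hij, rfl, rfl⟩))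

def ofWord (w : List ℕ) : MB := (w.map X).prod

@[simp] lemma ofWord_nil : ofWord [] = 1 := rfl

@[simp] lemma ofWord_cons (i : ℕ) (w : List ℕ) : ofWord (i :: w) = X i * ofWord w :=
  List.prod_cons

@[simp] lemma ofWord_append (u v : List ℕ) : ofWord (u ++ v) = ofWord u * ofWord v := by
  simp [ofWord]

@[simp] lemma ofWord_singleton (i : ℕ) : ofWord [i] = X i := by simp [ofWord]

lemma commute_ofWord {u v : List ℕ} (h : ∀ i ∈ u, ∀ j ∈ v, 1 ≤ i ∧ i + 2 ≤ j) :
    Commute (ofWord u) (ofWord v) :=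
  Commute.list_prod_left _ _ <| by
    simp only [List.mem_map]
    rintro _ ⟨i, hi, rfl⟩
    exact Commute.list_prod_right _ _ <| by
      simp only [List.mem_map]
      rintro _ ⟨j, hj, rfl⟩
      exact X_comm (h i hi j hj).1 (h i hi j hj).2

section Lift

variable {M : Type*} [Monoid M] (f : ℕ → M)
  (braid : ∀ i, 1 ≤ i → f (i + 1) * f i * f (i + 1) = f i * f (i + 1) * f i)
  (comm : ∀ i j, 1 ≤ i → i + 2 ≤ j → f i * f j = f j * f i)

def braidLift : MB →* M :=
  braidCon.lift (FreeMonoid.lift fun i : ℕ+ => f i) <| show braidCon ≤ _ from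
    Con.conGen_le.mpr <| by
      rintro a b (⟨i, rfl, rfl⟩ | ⟨i, j, hij, rfl, rfl⟩) <;>
        simp only [Con.ker_rel, map_mul, FreeMonoid.lift_eval_of, PNat.add_coe, PNat.one_coe]
      · exact braid i i.pos
      · exact comm i j i.pos (by exact_mod_cast hij)

lemma braidLift_X {i : ℕ} (hi : 1 ≤ i) : braidLift f braid comm (X i) = f i := by
  lift i to ℕ+ using hi
  rw [X_eq_braidGen, braidLift, braidGen, Con.lift_mk', FreeMonoid.lift_eval_of]

lemma braidLift_ofWord {w : List ℕ} (hw : ∀ i ∈ w, 1 ≤ i) :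
    braidLift f braid comm (ofWord w) = (w.map f).prod := by
  rw [ofWord, map_list_prod, List.map_map]
  exact congrArg _ (List.map_congr_left fun i hi => braidLift_X f braid comm (hw i hi))

end Lift

def simpleOn (a b : ℕ) : Set MB :=
  {β | ∃ w : List ℕ, w.Nodup ∧ (∀ i ∈ w, a ≤ i ∧ i < b) ∧ β = ofWord w}

lemma simpleOn_mono {a a' b b' : ℕ} (ha : a' ≤ a) (hb : b ≤ b') :
    simpleOn a b ⊆ simpleOn a' b' := by
  rintro _ ⟨w, hnd, hw, rfl⟩
  exact ⟨w, hnd, fun i hi => ⟨ha.trans (hw i hi).1, (hw i hi).2.trans_le hb⟩, rfl⟩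

lemma simpleOn_of_le {a b : ℕ} (h : b ≤ a) : simpleOn a b = {1} := by
  refine Set.eq_singleton_iff_unique_mem.mpr ⟨⟨[], List.nodup_nil, by simp, rfl⟩, ?_⟩
  rintro _ ⟨_ | ⟨i, w⟩, -, hw, rfl⟩
  · rfl
  · have := hw i List.mem_cons_self
    omega

lemma X_mem_simpleOn (a : ℕ) : X a ∈ simpleOn a (a + 1) :=
  ⟨[a], List.nodup_singleton a, by simp, by simp⟩

lemma mul_mem_simpleOn {a b c : ℕ} {γ δ : MB} (hab : a ≤ b) (hbc : b ≤ c)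
    (hγ : γ ∈ simpleOn a b) (hδ : δ ∈ simpleOn b c) :
    γ * δ ∈ simpleOn a c ∧ δ * γ ∈ simpleOn a c := by
  obtain ⟨u, hu, hul, rfl⟩ := hγ
  obtain ⟨v, hv, hvl, rfl⟩ := hδ
  have hdisj : u.Disjoint v := fun i hiu hiv => by
    have := hul i hiu; have := hvl i hiv; omega
  have hlet : ∀ i ∈ u ++ v, a ≤ i ∧ i < c := by
    intro i hi
    rcases List.mem_append.mp hi with hi | hi
    · have := hul i hi; omega
    · have := hvl i hi; omega
  exact ⟨⟨u ++ v, hu.append hv hdisj, hlet, (ofWord_append u v).symm⟩,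
    ⟨v ++ u, hv.append hu hdisj.symm, fun i hi => hlet i (List.perm_append_comm.mem_iff.mp hi),
      (ofWord_append v u).symm⟩⟩

lemma commute_of_mem_simpleOn {a b c : ℕ} {γ δ : MB} (ha : 1 ≤ a) (hγ : γ ∈ simpleOn a b)
    (hδ : δ ∈ simpleOn (b + 1) c) : Commute γ δ := by
  obtain ⟨u, -, hu, rfl⟩ := hγ
  obtain ⟨v, -, hv, rfl⟩ := hδ
  exact commute_ofWord fun i hi j hj => by have := hu i hi; have := hv j hj; omega

/-- Sending `x_n` to `0` is what makes the braid relations of `x_n` with `x_{n-1}` and `x_{n+1}`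
hold. -/
def splitAt (n : ℕ) : MB →* WithZero (MB × MB) :=
  braidLift
    (fun i => if i < n then ((X i, 1) : MB × MB) else if i = n then 0 else ((1, X i) : MB × MB))
    (fun i hi => by split_ifs <;> simp [← WithZero.coe_mul, X_braid hi] <;> omega)
    (fun i j hi hij => by split_ifs <;> simp [← WithZero.coe_mul, (X_comm hi hij).eq])

lemma splitAt_X_self {n : ℕ} (hn : 1 ≤ n) : splitAt n (X n) = 0 := by
  simp [splitAt, braidLift_X _ _ _ hn]

lemma splitAt_of_mem_low {n : ℕ} {γ : MB} (hγ : γ ∈ simpleOn 1 n) :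
    splitAt n γ = ((γ, 1) : MB × MB) := by
  obtain ⟨w, -, hw, rfl⟩ := hγ
  rw [splitAt, braidLift_ofWord _ _ _ fun i hi => (hw i hi).1,
    List.map_congr_left (g := WithZero.coeMonoidHom.comp (MonoidHom.inl MB MB) ∘ X)
      fun i hi => by simp [(hw i hi).2],
    ← List.map_map, ← map_list_prod]
  rfl

lemma splitAt_of_mem_high {n c : ℕ} {γ : MB} (hγ : γ ∈ simpleOn (n + 1) c) :
    splitAt n γ = ((1, γ) : MB × MB) := by
  obtain ⟨w, -, hw, rfl⟩ := hγ
  rw [splitAt, braidLift_ofWord _ _ _ fun i hi => by have := hw i hi; omega,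
    List.map_congr_left (g := WithZero.coeMonoidHom.comp (MonoidHom.inr MB MB) ∘ X)
      fun i hi => by have := hw i hi; simp [show ¬ i < n by omega, show i ≠ n by omega],
    ← List.map_map, ← map_list_prod]
  rfl

lemma not_genDvd_of_mem_simpleOn {j : ℕ} {γ : MB} (hj : 1 ≤ j) (hγ : γ ∈ simpleOn 1 j) :
    ¬ GenDvd j γ := by
  rintro ⟨δ, ε, rfl⟩
  have := splitAt_of_mem_low hγ
  simp [splitAt_X_self hj] at this

lemma mul_injOn_simpleOn (n c : ℕ) :
    Set.InjOn (fun p : MB × MB => p.1 * p.2) (simpleOn 1 n ×ˢ simpleOn (n + 1) c) := by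
  rintro ⟨γ, δ⟩ ⟨hγ, hδ⟩ ⟨γ', δ'⟩ ⟨hγ', hδ'⟩ h
  have := congrArg (splitAt n) h
  simp only [map_mul, splitAt_of_mem_low hγ, splitAt_of_mem_high hδ, splitAt_of_mem_low hγ',
    splitAt_of_mem_high hδ', ← WithZero.coe_mul, WithZero.coe_inj, Prod.mk_mul_mk] at this
  simpa using this

def perm : MB →* Perm ℕ :=
  braidLift (fun i => swap i (i + 1))
    (fun i _ => by ext x; simp only [Perm.mul_apply, swap_apply_def]; split_ifs <;> omega)
    (fun i j _ hij => by ext x; simp only [Perm.mul_apply, swap_apply_def]; split_ifs <;> omega)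

lemma perm_X {i : ℕ} (hi : 1 ≤ i) : perm (X i) = swap i (i + 1) := braidLift_X _ _ _ hi

lemma perm_ofWord_mem {S : Subgroup (Perm ℕ)} {w : List ℕ}
    (hw : ∀ i ∈ w, 1 ≤ i ∧ swap i (i + 1) ∈ S) : perm (ofWord w) ∈ S := by
  rw [perm, braidLift_ofWord _ _ _ fun i hi => (hw i hi).1]
  exact list_prod_mem (by simpa using fun i hi => (hw i hi).2)

lemma perm_ofWord_mem_fixingSubgroup {a b : ℕ} {w : List ℕ} (ha : 1 ≤ a)
    (hw : ∀ i ∈ w, a ≤ i ∧ i < b) : perm (ofWord w) ∈ fixingSubgroup (Perm ℕ) (Set.Icc a b)ᶜ :=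
  perm_ofWord_mem fun i hi => ⟨ha.trans (hw i hi).1, (mem_fixingSubgroup_iff _).mpr fun x hx =>
    swap_apply_of_ne_of_ne (by simp at hx; have := hw i hi; omega)
      (by simp at hx; have := hw i hi; omega)⟩

lemma perm_mem_fixingSubgroup {a b : ℕ} {γ : MB} (ha : 1 ≤ a) (hγ : γ ∈ simpleOn a b) :
    perm γ ∈ fixingSubgroup (Perm ℕ) (Set.Icc a b)ᶜ := by
  obtain ⟨w, -, hw, rfl⟩ := hγ
  exact perm_ofWord_mem_fixingSubgroup ha hw

lemma perm_inv_apply_of_mem_simpleOn {a b x : ℕ} {γ : MB} (ha : 1 ≤ a) (hγ : γ ∈ simpleOn a b)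
    (hx : b < x) : (perm γ)⁻¹ x = x :=
  (mem_fixingSubgroup_iff _).mp (inv_mem (perm_mem_fixingSubgroup ha hγ)) x (by simp; omega)

lemma perm_ofWord_mem_stabilizer_Iic {n : ℕ} {w : List ℕ} (hw : ∀ i ∈ w, 1 ≤ i) (hn : n ∉ w) :
    perm (ofWord w) ∈ MulAction.stabilizer (Perm ℕ) (Set.Iic n) :=
  perm_ofWord_mem fun i hi => ⟨hw i hi, MulAction.mem_stabilizer_set.mpr fun x => by
    have : i ≠ n := fun h => hn (h ▸ hi)
    simp only [Set.mem_Iic, Perm.smul_def, swap_apply_def]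
    split_ifs <;> omega⟩

lemma perm_ofWord_apply_self {n : ℕ} {w : List ℕ} (hw : ∀ i ∈ w, 1 ≤ i) (hn : n ∉ w)
    (hn' : n - 1 ∉ w) : perm (ofWord w) n = n :=
  (mem_fixingSubgroup_iff _).mp (perm_ofWord_mem (S := fixingSubgroup _ {n}) fun i hi =>
    ⟨hw i hi, (mem_fixingSubgroup_iff _).mpr fun x hx => by
      have : i ≠ n := fun h => hn (h ▸ hi)
      have : i ≠ n - 1 := fun h => hn' (h ▸ hi)
      rw [Set.mem_singleton_iff.mp hx, Perm.smul_def]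
      exact swap_apply_of_ne_of_ne (by omega) (by have := hw i hi; omega)⟩) n rfl

lemma perm_inv_ofWord_apply_le {a s : ℕ} {w : List ℕ} (ha : 1 ≤ a) (hnd : w.Nodup)
    (hw : ∀ i ∈ w, a ≤ i ∧ i ≤ s) (hs : s ∈ w) : (perm (ofWord w))⁻¹ (s + 1) ≤ s := by
  obtain ⟨p, q, rfl⟩ := List.append_of_mem hs
  have hsp : s ∉ p := fun h => (List.nodup_append'.mp hnd).2.2 h List.mem_cons_self
  have hsq : s ∉ q := (List.nodup_cons.mp (List.nodup_append'.mp hnd).2.1).1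
  have hp := perm_ofWord_mem_fixingSubgroup (b := s) (w := p) ha fun i hi => by
    have := hw i (by simp [hi]); exact ⟨this.1, lt_of_le_of_ne this.2 (by rintro rfl; exact hsp hi)⟩
  have hq := perm_ofWord_mem_fixingSubgroup (b := s) (w := q) ha fun i hi => by
    have := hw i (by simp [hi]); exact ⟨this.1, lt_of_le_of_ne this.2 (by rintro rfl; exact hsq hi)⟩
  have hp' : (perm (ofWord p))⁻¹ (s + 1) = s + 1 :=
    (mem_fixingSubgroup_iff _).mp (inv_mem hp) _ (by simp)
  have hq' := apply_mem_of_mem_fixingSubgroup_compl (inv_mem hq)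
    (Set.right_mem_Icc.mpr (hw s hs).1)
  simp only [ofWord_append, ofWord_cons, map_mul, perm_X (ha.trans (hw s hs).1), mul_inv_rev,
    Perm.mul_apply, hp', swap_inv, swap_apply_right]
  exact hq'.2

lemma ofWord_not_mem_simpleOn {a s : ℕ} {w : List ℕ} (ha : 1 ≤ a) (hnd : w.Nodup)
    (hw : ∀ i ∈ w, a ≤ i ∧ i ≤ s) (hs : s ∈ w) : ofWord w ∉ simpleOn a s := fun h => by
  have := perm_inv_ofWord_apply_le ha hnd hw hs
  rw [perm_inv_apply_of_mem_simpleOn ha h s.lt_succ_self] at this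
  omega

lemma perm_inv_apply_le {a s : ℕ} {γ : MB} (ha : 1 ≤ a)
    (hγ : γ ∈ simpleOn a (s + 1) \ simpleOn a s) : (perm γ)⁻¹ (s + 1) ≤ s := by
  obtain ⟨⟨w, hnd, hw, rfl⟩, hγs⟩ := hγ
  have hw' : ∀ i ∈ w, a ≤ i ∧ i ≤ s := fun i hi => ⟨(hw i hi).1, Nat.le_of_lt_succ (hw i hi).2⟩
  by_cases hs : s ∈ w
  · exact perm_inv_ofWord_apply_le ha hnd hw' hs
  · refine absurd ⟨w, hnd, fun i hi => ⟨(hw i hi).1, ?_⟩, rfl⟩ hγs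
    exact lt_of_le_of_ne (hw' i hi).2 (by rintro rfl; exact hs hi)

lemma lt_perm_ofWord_apply_or {n : ℕ} {w : List ℕ} (hnd : w.Nodup) (hw : ∀ i ∈ w, 1 ≤ i)
    (hn : n ∈ w) : n < perm (ofWord w) n ∨ n < (perm (ofWord w))⁻¹ n := by
  obtain ⟨u, v, rfl⟩ := List.append_of_mem hn
  obtain ⟨-, -, hdisj⟩ := List.nodup_append'.mp hnd
  have hnu : n ∉ u := fun h => hdisj h List.mem_cons_self
  have hnv : n ∉ v := (List.nodup_cons.mp (List.nodup_append'.mp hnd).2.1).1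
  have hu : ∀ i ∈ u, 1 ≤ i := fun i hi => hw i (by simp [hi])
  have hv : ∀ i ∈ v, 1 ≤ i := fun i hi => hw i (by simp [hi])
  rw [ofWord_append, ofWord_cons, map_mul, map_mul, perm_X (hw n hn), ← mul_assoc]
  by_cases hv' : n - 1 ∈ v
  · have hu' : n - 1 ∉ u := fun h => hdisj h (List.mem_cons_of_mem _ hv')
    rw [mul_inv_rev, mul_inv_rev, swap_inv, ← mul_assoc]
    exact Or.inr (lt_mul_swap_mul_apply (inv_mem (perm_ofWord_mem_stabilizer_Iic hv hnv))
      (Perm.inv_eq_iff_eq.mpr (perm_ofWord_apply_self hu hnu hu').symm))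
  · exact Or.inl (lt_mul_swap_mul_apply (perm_ofWord_mem_stabilizer_Iic hu hnu)
      (perm_ofWord_apply_self hv hnv hv'))

lemma not_commute_ofWord {n : ℕ} {β : MB} {w : List ℕ} (hn : 2 ≤ n) (hβ : β ∈ simpleOn 1 n)
    (hdvd : GenDvd (n - 1) β) (hnd : w.Nodup) (hw : ∀ i ∈ w, 1 ≤ i) (hnw : n ∈ w) :
    ¬ Commute β (ofWord w) := fun h => by
  have hfix : ∀ x, n < x → perm β x = x := fun x hx =>
    (mem_fixingSubgroup_iff _).mp (perm_mem_fixingSubgroup le_rfl hβ) x (by simp; omega)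
  have hmove : perm β n ≠ n := fun h => by
    have hβ' : β ∈ simpleOn 1 (n - 1 + 1) \ simpleOn 1 (n - 1) :=
      ⟨by rwa [Nat.sub_add_cancel (by omega)],
        fun h' => not_genDvd_of_mem_simpleOn (by omega) h' hdvd⟩
    have := perm_inv_apply_le le_rfl hβ'
    rw [Nat.sub_add_cancel (by omega), Perm.inv_eq_iff_eq.mpr h.symm] at this
    omega
  rcases lt_perm_ofWord_apply_or hnd hw hnw with hg | hg
  · exact not_commute_of_lt_apply hfix hmove hg (h.map perm)
  · exact not_commute_of_lt_apply hfix hmove hg (h.map perm).inv_right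

lemma ofWord_append_cons_eq_mul_X {u v : List ℕ} {t : ℕ} (hv : ∀ i ∈ v, 1 ≤ i ∧ i + 2 ≤ t) :
    ofWord (u ++ t :: v) = ofWord (u ++ v) * X t := by
  have hcomm := commute_ofWord (v := [t]) fun i hi j hj => by
    rw [List.mem_singleton.mp hj]; exact hv i hi
  rw [ofWord_singleton] at hcomm
  simp only [ofWord_append, ofWord_cons, mul_assoc, hcomm.eq]

lemma ofWord_append_cons_eq_X_mul {u v : List ℕ} {t : ℕ} (hu : ∀ i ∈ u, 1 ≤ i ∧ i + 2 ≤ t) :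
    ofWord (u ++ t :: v) = X t * ofWord (u ++ v) := by
  have hcomm := commute_ofWord (v := [t]) fun i hi j hj => by
    rw [List.mem_singleton.mp hj]; exact hu i hi
  rw [ofWord_singleton] at hcomm
  simp only [ofWord_append, ofWord_cons, ← mul_assoc, hcomm.eq]

lemma simpleOn_succ_eq {a t : ℕ} (ha : 1 ≤ a) (hat : a ≤ t) :
    simpleOn a (t + 1) = simpleOn a t ∪ (· * X t) '' simpleOn a t ∪
      (X t * ·) '' (simpleOn a t \ simpleOn a (t - 1)) := by
  ext γ
  constructor
  · rintro ⟨w, hnd, hw, rfl⟩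
    by_cases ht : t ∈ w
    · obtain ⟨u, v, rfl⟩ := List.append_of_mem ht
      have hperm : (u ++ t :: v).Perm (t :: (u ++ v)) := List.perm_middle
      obtain ⟨htuv, hnd'⟩ := List.nodup_cons.mp (hperm.nodup_iff.mp hnd)
      have huv : ∀ i ∈ u ++ v, a ≤ i ∧ i < t := fun i hi => by
        have := hw i (hperm.symm.subset (List.mem_cons_of_mem _ hi))
        exact ⟨this.1, lt_of_le_of_ne (Nat.le_of_lt_succ this.2) (by rintro rfl; exact htuv hi)⟩
      have hmem : ofWord (u ++ v) ∈ simpleOn a t := ⟨_, hnd', huv, rfl⟩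
      by_cases hv : t - 1 ∈ v
      · have hu : t - 1 ∉ u := fun hu => (List.nodup_append'.mp hnd').2.2 hu hv
        refine Or.inr ⟨_, ⟨hmem, ofWord_not_mem_simpleOn ha hnd' (fun i hi => ?_)
          (List.mem_append_right _ hv)⟩, (ofWord_append_cons_eq_X_mul fun i hi => ?_).symm⟩
        · have := huv i hi; omega
        · have := huv i (List.mem_append_left _ hi)
          have : i ≠ t - 1 := fun h => hu (h ▸ hi)
          omega
      · refine Or.inl (Or.inr ⟨_, hmem, (ofWord_append_cons_eq_mul_X fun i hi => ?_).symm⟩)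
        have := huv i (List.mem_append_right _ hi)
        have : i ≠ t - 1 := fun h => hv (h ▸ hi)
        omega
    · refine Or.inl (Or.inl ⟨w, hnd, fun i hi => ⟨(hw i hi).1, ?_⟩, rfl⟩)
      exact lt_of_le_of_ne (Nat.le_of_lt_succ (hw i hi).2) (by rintro rfl; exact ht hi)
  · rintro ((hγ | ⟨δ, hδ, rfl⟩) | ⟨δ, ⟨hδ, -⟩, rfl⟩)
    · exact simpleOn_mono le_rfl t.le_succ hγ
    · exact (mul_mem_simpleOn hat t.le_succ hδ (X_mem_simpleOn t)).1
    · exact (mul_mem_simpleOn hat t.le_succ hδ (X_mem_simpleOn t)).2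

lemma perm_inv_mul_X_apply {a t : ℕ} {δ : MB} (ha : 1 ≤ a) (hat : a ≤ t)
    (hδ : δ ∈ simpleOn a t) :
    (perm (δ * X t))⁻¹ (t + 1) = t := by
  rw [map_mul, perm_X (ha.trans hat), mul_inv_rev, Perm.mul_apply,
    perm_inv_apply_of_mem_simpleOn ha hδ t.lt_succ_self, swap_inv, swap_apply_right]

lemma perm_inv_X_mul_apply_lt {a t : ℕ} {δ : MB} (ha : 1 ≤ a) (hat : a ≤ t)
    (hδ : δ ∈ simpleOn a t \ simpleOn a (t - 1)) :
    (perm (X t * δ))⁻¹ (t + 1) < t := by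
  rw [map_mul, perm_X (ha.trans hat), mul_inv_rev, Perm.mul_apply, swap_inv, swap_apply_right]
  have := perm_inv_apply_le (s := t - 1) ha (by rwa [Nat.sub_add_cancel (by omega)])
  rw [Nat.sub_add_cancel (by omega)] at this
  omega

lemma perm_ne_of_mem_mul_X {a t : ℕ} {γ δ : MB} (ha : 1 ≤ a) (hat : a ≤ t)
    (hγ : γ ∈ simpleOn a t)
    (hδ : δ ∈ (· * X t) '' simpleOn a t) : perm γ ≠ perm δ := fun h => by
  obtain ⟨δ, hδ, rfl⟩ := hδ
  have := perm_inv_mul_X_apply ha hat hδ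
  rw [← h, perm_inv_apply_of_mem_simpleOn ha hγ t.lt_succ_self] at this
  omega

lemma perm_ne_of_mem_X_mul {a t : ℕ} {γ δ : MB} (ha : 1 ≤ a) (hat : a ≤ t)
    (hγ : γ ∈ simpleOn a t ∪ (· * X t) '' simpleOn a t)
    (hδ : δ ∈ (X t * ·) '' (simpleOn a t \ simpleOn a (t - 1))) : perm γ ≠ perm δ := fun h => by
  obtain ⟨δ, hδ, rfl⟩ := hδ
  have := perm_inv_X_mul_apply_lt ha hat hδ
  rw [← h] at this
  rcases hγ with hγ | ⟨γ, hγ, rfl⟩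
  · rw [perm_inv_apply_of_mem_simpleOn ha hγ t.lt_succ_self] at this; omega
  · rw [perm_inv_mul_X_apply ha hat hγ] at this; omega

lemma perm_injOn_simpleOn {a : ℕ} (ha : 1 ≤ a) (b : ℕ) : Set.InjOn perm (simpleOn a b) := by
  induction b with
  | zero => rw [simpleOn_of_le a.zero_le]; exact Set.injOn_singleton _ _
  | succ t ih =>
    rcases lt_or_ge t a with hta | hat
    · rw [simpleOn_of_le hta]; exact Set.injOn_singleton _ _
    rw [simpleOn_succ_eq ha hat]
    refine (Set.injOn_union (Set.disjoint_left.mpr fun γ hγ hγ' =>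
      perm_ne_of_mem_X_mul ha hat hγ hγ' rfl)).mpr
        ⟨(Set.injOn_union (Set.disjoint_left.mpr fun γ hγ hγ' =>
          perm_ne_of_mem_mul_X ha hat hγ hγ' rfl)).mpr
            ⟨ih, ?_, fun _ hγ _ hδ => perm_ne_of_mem_mul_X ha hat hγ hδ⟩,
          ?_, fun _ hγ _ hδ => perm_ne_of_mem_X_mul ha hat hγ hδ⟩
    · rintro _ ⟨γ, hγ, rfl⟩ _ ⟨δ, hδ, rfl⟩ h
      rw [map_mul, map_mul] at h
      rw [ih hγ hδ (mul_right_cancel h)]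
    · rintro _ ⟨γ, hγ, rfl⟩ _ ⟨δ, hδ, rfl⟩ h
      rw [map_mul, map_mul] at h
      rw [ih hγ.1 hδ.1 (mul_left_cancel h)]

lemma finite_simpleOn {a : ℕ} (ha : 1 ≤ a) (b : ℕ) : (simpleOn a b).Finite := by
  induction b with
  | zero => rw [simpleOn_of_le a.zero_le]; exact Set.finite_singleton 1
  | succ t ih =>
    rcases lt_or_ge t a with hta | hat
    · rw [simpleOn_of_le hta]; exact Set.finite_singleton 1
    rw [simpleOn_succ_eq ha hat]
    exact (ih.union (ih.image _)).union (ih.sdiff.image _)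

lemma ncard_simpleOn_succ {a t : ℕ} (ha : 1 ≤ a) (hat : a ≤ t) :
    (simpleOn a (t + 1)).ncard + (simpleOn a (t - 1)).ncard = 3 * (simpleOn a t).ncard := by
  have hfin := finite_simpleOn ha t
  have hinj := perm_injOn_simpleOn ha t
  have hsub : simpleOn a (t - 1) ⊆ simpleOn a t := simpleOn_mono le_rfl (Nat.sub_le t 1)
  have hmulX : Set.InjOn (· * X t) (simpleOn a t) := fun γ hγ δ hδ h =>
    hinj hγ hδ (by simpa using congrArg perm h)
  have hXmul : Set.InjOn (X t * ·) (simpleOn a t \ simpleOn a (t - 1)) := fun γ hγ δ hδ h =>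
    hinj hγ.1 hδ.1 (by simpa using congrArg perm h)
  rw [simpleOn_succ_eq ha hat,
    Set.ncard_union_eq
      (Set.disjoint_left.mpr fun _ hγ hγ' => perm_ne_of_mem_X_mul ha hat hγ hγ' rfl)
      (hfin.union (hfin.image _)) (hfin.sdiff.image _),
    Set.ncard_union_eq
      (Set.disjoint_left.mpr fun _ hγ hγ' => perm_ne_of_mem_mul_X ha hat hγ hγ' rfl)
      hfin (hfin.image _),
    hmulX.ncard_image, hXmul.ncard_image, Set.ncard_sdiff hsub (hfin.subset hsub)]
  have := Set.ncard_le_ncard hsub hfin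
  omega

theorem ncard_simpleOn {a : ℕ} (ha : 1 ≤ a) (k : ℕ) :
    (simpleOn a (a + k)).ncard = Nat.fib (2 * k + 1) := by
  induction k using Nat.twoStepInduction with
  | zero => simp [simpleOn_of_le]
  | one =>
    have := ncard_simpleOn_succ ha le_rfl
    rw [simpleOn_of_le (Nat.sub_le a 1), simpleOn_of_le le_rfl] at this
    simp only [Set.ncard_singleton] at this
    rw [show Nat.fib (2 * 1 + 1) = 2 from rfl]
    omega
  | more k ih0 ih1 =>
    have := ncard_simpleOn_succ ha (t := a + (k + 1)) (by omega)
    rw [show a + (k + 1) - 1 = a + k by omega, ih0, ih1, add_assoc] at this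
    have e1 := Nat.fib_add_two (n := 2 * k + 1)
    have e2 := Nat.fib_add_two (n := 2 * k + 2)
    have e3 := Nat.fib_add_two (n := 2 * k + 3)
    ring_nf at this e1 e2 e3 ⊢
    omega

lemma ofWord_eq_filter_mul_filter {n : ℕ} {w : List ℕ} (hw : ∀ i ∈ w, 1 ≤ i) (hn : n ∉ w) :
    ofWord w = ofWord (w.filter (· < n)) * ofWord (w.filter (n < ·)) := by
  induction w with
  | nil => rfl
  | cons i w ih =>
    rw [ofWord_cons, ih (fun j hj => hw j (List.mem_cons_of_mem _ hj))
      (fun h => hn (List.mem_cons_of_mem _ h))]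
    rcases lt_or_gt_of_ne (fun h : i = n => hn (h ▸ List.mem_cons_self)) with hin | hin
    · simp [hin, hin.not_gt, mul_assoc]
    · have hcomm : Commute (ofWord (w.filter (· < n))) (X i) := by
        rw [← ofWord_singleton]
        exact commute_ofWord fun j hj k hk => by
          simp only [List.mem_filter, decide_eq_true_eq, List.mem_singleton] at hj hk
          have := hw j (List.mem_cons_of_mem _ hj.1); omega
      simp [hin, hin.not_gt, ← mul_assoc, hcomm.eq]

lemma C_add_eq_image_mul {n m : ℕ} {β : MB} (hn : 2 ≤ n) (hβ : β ∈ SB n)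
    (hdvd : GenDvd (n - 1) β) :
    C (n + m) β = (fun p : MB × MB => p.1 * p.2) '' (C n β ×ˢ simpleOn (n + 1) (n + m)) := by
  ext γ
  constructor
  · rintro ⟨hγ, hcomm⟩
    obtain ⟨w, hnd, hw, rfl⟩ : γ ∈ simpleOn 1 (n + m) := hγ
    have hnw : n ∉ w := fun h =>
      not_commute_ofWord hn hβ hdvd hnd (fun i hi => (hw i hi).1) h hcomm
    set γ₁ := ofWord (w.filter (· < n))
    set γ₂ := ofWord (w.filter (n < ·))
    have hγ₁ : γ₁ ∈ simpleOn 1 n := ⟨_, hnd.filter _, fun i hi => by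
      simp only [List.mem_filter, decide_eq_true_eq] at hi; exact ⟨(hw i hi.1).1, hi.2⟩, rfl⟩
    have hγ₂ : γ₂ ∈ simpleOn (n + 1) (n + m) := ⟨_, hnd.filter _, fun i hi => by
      simp only [List.mem_filter, decide_eq_true_eq] at hi; exact ⟨hi.2, (hw i hi.1).2⟩, rfl⟩
    rw [ofWord_eq_filter_mul_filter (fun i hi => (hw i hi).1) hnw] at hcomm ⊢
    refine ⟨(γ₁, γ₂), ⟨⟨hγ₁, ?_⟩, hγ₂⟩, rfl⟩
    have hβγ₂ := commute_of_mem_simpleOn le_rfl hβ hγ₂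
    have := congrArg (splitAt n) (show β * γ₁ * γ₂ = γ₁ * β * γ₂ by
      rw [mul_assoc, hcomm, mul_assoc, mul_assoc, hβγ₂.eq])
    simp only [map_mul, splitAt_of_mem_low hβ, splitAt_of_mem_low hγ₁, splitAt_of_mem_high hγ₂,
      ← WithZero.coe_mul, WithZero.coe_inj, Prod.mk_mul_mk, Prod.mk.injEq, mul_one] at this
    exact this.1
  · rintro ⟨⟨γ₁, γ₂⟩, ⟨⟨hγ₁, hγ₁β⟩, hγ₂⟩, rfl⟩
    refine ⟨(mul_mem_simpleOn (by omega) (by omega) hγ₁ (simpleOn_mono n.le_succ le_rfl hγ₂)).1, ?_⟩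
    exact Commute.mul_right hγ₁β (commute_of_mem_simpleOn le_rfl hβ hγ₂)

/-- Corollary 1.4: if `β ∈ SB_n` with `x_{n-1} ∣ β`, then
`c_{n+m}(β) = c_n(β) · F_{2m-1}` for all `m ≥ 1`. -/
theorem simple_centralizer_card (n m : ℕ) (hn : 2 ≤ n) (hm : 1 ≤ m) (β : MB)
    (hβ : β ∈ SB n) (hdvd : GenDvd (n - 1) β) :
    c (n + m) β = c n β * Nat.fib (2 * m - 1) := by
  have hinj : Set.InjOn (fun p : MB × MB => p.1 * p.2) (C n β ×ˢ simpleOn (n + 1) (n + m)) :=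
    (mul_injOn_simpleOn n (n + m)).mono (Set.prod_mono (fun _ hγ => hγ.1) le_rfl)
  have hcard : (simpleOn (n + 1) (n + m)).ncard = Nat.fib (2 * m - 1) := by
    obtain ⟨k, rfl⟩ := Nat.exists_eq_add_of_le' hm
    rw [show n + (k + 1) = n + 1 + k by ring, ncard_simpleOn (by omega)]
    congr 1
  rw [c, c, C_add_eq_image_mul hn hβ hdvd, hinj.ncard_image, Set.ncard_prod, hcard]
end

section
/- Let n ≥ 2 and let β, γ ∈ MB_∞. If x_{n−1} left-divides βγ and x_{n−1} does not divide β, then x_{n−1} left-divides γ. -/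
/-!
The argument is Garside's first-letter lemma: if `a P ≡ b Q` for positive braid words, both
sides are right multiples of the least common multiple of `a` and `b`, namely `a`, `a b` or
`a b a` according as `b` equals `a`, commutes with it, or is adjacent to it. It is proved by
induction on length, and for fixed length by induction along a chain of elementary rewritings
from `a P` to `b Q`; a rewriting at the head changes the first letter, and the resulting
configurations of three generators are resolved by the lemma for shorter words.

If `x_i` left-divides `βγ` and does not occur in a word for `β`, the letters of `β` are then
peeled off one at a time: each differs from `x_i`, so `x_i` still left-divides what remains.
-/

namespace BraidWord

def Far (a b : ℕ+) : Prop := a + 2 ≤ b ∨ b + 2 ≤ a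

def Adj (a b : ℕ+) : Prop := b = a + 1 ∨ a = b + 1

theorem far_iff {a b : ℕ+} : Far a b ↔ (a : ℕ) + 2 ≤ b ∨ (b : ℕ) + 2 ≤ a := by
  simp only [Far, ← PNat.coe_le_coe, PNat.add_coe, PNat.val_ofNat]

theorem adj_iff {a b : ℕ+} : Adj a b ↔ (b : ℕ) = a + 1 ∨ (a : ℕ) = b + 1 := by
  simp only [Adj, ← PNat.coe_inj, PNat.add_coe, PNat.val_ofNat]

theorem Far.symm {a b : ℕ+} (h : Far a b) : Far b a := Or.symm h

theorem Adj.symm {a b : ℕ+} (h : Adj a b) : Adj b a := Or.symm h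

theorem Far.ne {a b : ℕ+} (h : Far a b) : a ≠ b := by
  rw [far_iff] at h; rw [Ne, ← PNat.coe_inj]; omega

theorem Adj.ne {a b : ℕ+} (h : Adj a b) : a ≠ b := by
  rw [adj_iff] at h; rw [Ne, ← PNat.coe_inj]; omega

theorem Adj.not_far {a b : ℕ+} (h : Adj a b) : ¬ Far a b := by
  rw [adj_iff] at h; rw [far_iff]; omega

theorem not_adj_of_adj_of_adj {a b c : ℕ+} (hab : Adj a b) (hbc : Adj b c) : ¬ Adj a c := by
  rw [adj_iff] at hab hbc ⊢; omega

inductive Step : List ℕ+ → List ℕ+ → Prop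
  | swap {a c : ℕ+} (h : Far a c) (t : List ℕ+) : Step (a :: c :: t) (c :: a :: t)
  | braid {a c : ℕ+} (h : Adj a c) (t : List ℕ+) : Step (a :: c :: a :: t) (c :: a :: c :: t)
  | cons (a : ℕ+) {u v : List ℕ+} : Step u v → Step (a :: u) (a :: v)

namespace Step

variable {u v : List ℕ+}

theorem symm (h : Step u v) : Step v u := by
  induction h with
  | swap h t => exact swap h.symm t
  | braid h t => exact braid h.symm t
  | cons a _ ih => exact cons a ih

theorem length_eq (h : Step u v) : u.length = v.length := by
  induction h <;> simp_all

theorem append_right (t : List ℕ+) (h : Step u v) : Step (u ++ t) (v ++ t) := by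
  induction h with
  | swap h s => exact swap h (s ++ t)
  | braid h s => exact braid h (s ++ t)
  | cons a _ ih => exact cons a ih

instance : Std.Symm Step := ⟨fun _ _ => Step.symm⟩

end Step

/-- As `Step` is symmetric, this is the equivalence generated by the braid relations. -/
def Equiv : List ℕ+ → List ℕ+ → Prop := Relation.ReflTransGen Step

local infix:50 " ≡ᵇ " => Equiv

namespace Equiv

variable {u v w : List ℕ+}

theorem refl (u : List ℕ+) : u ≡ᵇ u := Relation.ReflTransGen.refl

theorem single (h : Step u v) : u ≡ᵇ v := Relation.ReflTransGen.single h

theorem symm (h : u ≡ᵇ v) : v ≡ᵇ u :=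
  Std.Symm.symm (r := Relation.ReflTransGen Step) _ _ h

theorem trans (h₁ : u ≡ᵇ v) (h₂ : v ≡ᵇ w) : u ≡ᵇ w := Relation.ReflTransGen.trans h₁ h₂

instance : Trans Equiv Equiv Equiv := ⟨trans⟩

theorem length_eq (h : u ≡ᵇ v) : u.length = v.length := by
  induction h with
  | refl => rfl
  | tail _ hs ih => exact ih.trans hs.length_eq

theorem cons (a : ℕ+) (h : u ≡ᵇ v) : a :: u ≡ᵇ a :: v :=
  Relation.ReflTransGen.lift (p := Step) (a :: ·) (fun _ _ => Step.cons a) _ _ h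

theorem append_right (t : List ℕ+) (h : u ≡ᵇ v) : u ++ t ≡ᵇ v ++ t :=
  Relation.ReflTransGen.lift (p := Step) (· ++ t) (fun _ _ => Step.append_right t) _ _ h

theorem append_left (s : List ℕ+) (h : u ≡ᵇ v) : s ++ u ≡ᵇ s ++ v := by
  induction s with
  | nil => exact h
  | cons a s ih => exact ih.cons a

theorem append {u' v' : List ℕ+} (hu : u ≡ᵇ u') (hv : v ≡ᵇ v') : u ++ v ≡ᵇ u' ++ v' :=
  (hu.append_right v).trans (hv.append_left u')

end Equiv

theorem equiv_swap {a c : ℕ+} (h : Far a c) (t : List ℕ+) : a :: c :: t ≡ᵇ c :: a :: t :=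
  .single (.swap h t)

theorem equiv_braid {a c : ℕ+} (h : Adj a c) (t : List ℕ+) :
    a :: c :: a :: t ≡ᵇ c :: a :: c :: t :=
  .single (.braid h t)

/-- `a :: P` and `b :: Q` are equivalent to the least common right multiple of `a` and `b`
followed by a common word; that multiple is `a`, `a b` or `a b a` according as `b` equals, is far
from, or is adjacent to `a`. -/
def ThroughLcm (a b : ℕ+) (P Q : List ℕ+) : Prop :=
  (a = b ∧ P ≡ᵇ Q) ∨
  (Far a b ∧ ∃ Z, P ≡ᵇ b :: Z ∧ Q ≡ᵇ a :: Z) ∨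
  (Adj a b ∧ ∃ Z, P ≡ᵇ b :: a :: Z ∧ Q ≡ᵇ a :: b :: Z)

namespace ThroughLcm

variable {a b c : ℕ+} {P Q : List ℕ+}

theorem of_far (h : Far a b) (Z : List ℕ+) (hP : P ≡ᵇ b :: Z) (hQ : Q ≡ᵇ a :: Z) :
    ThroughLcm a b P Q :=
  Or.inr (Or.inl ⟨h, Z, hP, hQ⟩)

theorem of_adj (h : Adj a b) (Z : List ℕ+) (hP : P ≡ᵇ b :: a :: Z) (hQ : Q ≡ᵇ a :: b :: Z) :
    ThroughLcm a b P Q :=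
  Or.inr (Or.inr ⟨h, Z, hP, hQ⟩)

theorem equiv (h : ThroughLcm a a P Q) : P ≡ᵇ Q := by
  rcases h with ⟨-, h⟩ | ⟨h, -⟩ | ⟨h, -⟩
  · exact h
  · exact absurd rfl h.ne
  · exact absurd rfl h.ne

theorem exists_of_far (hab : Far a b) (h : ThroughLcm a b P Q) :
    ∃ Z, P ≡ᵇ b :: Z ∧ Q ≡ᵇ a :: Z := by
  rcases h with ⟨rfl, -⟩ | ⟨-, h⟩ | ⟨h, -⟩
  · exact absurd rfl hab.ne
  · exact h
  · exact absurd hab h.not_far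

theorem exists_of_adj (hab : Adj a b) (h : ThroughLcm a b P Q) :
    ∃ Z, P ≡ᵇ b :: a :: Z ∧ Q ≡ᵇ a :: b :: Z := by
  rcases h with ⟨rfl, -⟩ | ⟨h, -⟩ | ⟨-, h⟩
  · exact absurd rfl hab.ne
  · exact absurd h hab.not_far
  · exact h

theorem congr {P' Q' : List ℕ+} (hP : P ≡ᵇ P') (hQ : Q ≡ᵇ Q') (h : ThroughLcm a b P' Q') :
    ThroughLcm a b P Q := by
  rcases h with ⟨hab, h⟩ | ⟨hab, Z, h₁, h₂⟩ | ⟨hab, Z, h₁, h₂⟩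
  · exact Or.inl ⟨hab, hP.trans (h.trans hQ.symm)⟩
  · exact of_far hab Z (hP.trans h₁) (hQ.trans h₂)
  · exact of_adj hab Z (hP.trans h₁) (hQ.trans h₂)

theorem cons_of_far (hca : Far c a) (hcb : Far c b) (h : ThroughLcm a b P Q) :
    ThroughLcm a b (c :: P) (c :: Q) := by
  rcases h with ⟨hab, h⟩ | ⟨hab, Z, h₁, h₂⟩ | ⟨hab, Z, h₁, h₂⟩
  · exact Or.inl ⟨hab, h.cons c⟩
  · refine of_far hab (c :: Z) ((h₁.cons c).trans (equiv_swap hcb Z)) ?_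
    exact (h₂.cons c).trans (equiv_swap hca Z)
  · refine of_adj hab (c :: Z) ?_ ?_
    · calc c :: P ≡ᵇ c :: b :: a :: Z := h₁.cons c
        _ ≡ᵇ b :: c :: a :: Z := equiv_swap hcb _
        _ ≡ᵇ b :: a :: c :: Z := (equiv_swap hca Z).cons b
    · calc c :: Q ≡ᵇ c :: a :: b :: Z := h₂.cons c
        _ ≡ᵇ a :: c :: b :: Z := equiv_swap hca _
        _ ≡ᵇ a :: b :: c :: Z := (equiv_swap hcb Z).cons a

end ThroughLcm

def FirstLetterBelow (L : ℕ) : Prop :=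
  ∀ a b P Q, P.length < L → a :: P ≡ᵇ b :: Q → ThroughLcm a b P Q

namespace FirstLetterBelow

variable {L : ℕ} {a b c : ℕ+} {P Q t Z : List ℕ+}

theorem cancel (ih : FirstLetterBelow L) (hP : P.length < L) (h : a :: P ≡ᵇ a :: Q) : P ≡ᵇ Q :=
  (ih a a P Q hP h).equiv

theorem far (ih : FirstLetterBelow L) (hab : Far a b) (hP : P.length < L)
    (h : a :: P ≡ᵇ b :: Q) : ∃ Z, P ≡ᵇ b :: Z ∧ Q ≡ᵇ a :: Z :=
  (ih a b P Q hP h).exists_of_far hab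

theorem adj (ih : FirstLetterBelow L) (hab : Adj a b) (hP : P.length < L)
    (h : a :: P ≡ᵇ b :: Q) : ∃ Z, P ≡ᵇ b :: a :: Z ∧ Q ≡ᵇ a :: b :: Z :=
  (ih a b P Q hP h).exists_of_adj hab

theorem swap_head_of_adj (ih : FirstLetterBelow L) (hac : Far a c) (hcb : Adj c b)
    (ht : t.length < L) (h : a :: t ≡ᵇ b :: c :: Z) (hQ : Q ≡ᵇ c :: b :: Z) :
    ThroughLcm a b (c :: t) Q := by
  have hZ : Z.length < L := by have := h.length_eq; simp at this; omega
  rcases ih a b t (c :: Z) ht h with ⟨rfl, -⟩ | ⟨hab, Y, htY, hZY⟩ | ⟨hab, Y, htY, hZY⟩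
  · exact absurd hac hcb.symm.not_far
  · obtain ⟨V, hZV, hYV⟩ := ih.far hac.symm hZ hZY
    refine .of_far hab (c :: b :: V) ?_ ?_
    · calc c :: t ≡ᵇ c :: b :: Y := htY.cons c
        _ ≡ᵇ c :: b :: c :: V := (hYV.cons b).cons c
        _ ≡ᵇ b :: c :: b :: V := equiv_braid hcb V
    · calc Q ≡ᵇ c :: b :: Z := hQ
        _ ≡ᵇ c :: b :: a :: V := (hZV.cons b).cons c
        _ ≡ᵇ c :: a :: b :: V := (equiv_swap hab.symm V).cons c
        _ ≡ᵇ a :: c :: b :: V := equiv_swap hac.symm _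
  · have hY : Y.length < L := by have := htY.length_eq; simp at this; omega
    obtain ⟨V, hZV, hYV⟩ := ih.far hac.symm hZ hZY
    obtain ⟨U, hYU, hVU⟩ := ih.adj hcb.symm hY hYV
    refine .of_adj hab (c :: b :: a :: U) ?_ ?_
    · calc c :: t ≡ᵇ c :: b :: a :: Y := htY.cons c
        _ ≡ᵇ c :: b :: a :: c :: b :: U := ((hYU.cons a).cons b).cons c
        _ ≡ᵇ c :: b :: c :: a :: b :: U := ((equiv_swap hac _).cons b).cons c
        _ ≡ᵇ b :: c :: b :: a :: b :: U := equiv_braid hcb _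
        _ ≡ᵇ b :: c :: a :: b :: a :: U := ((equiv_braid hab.symm U).cons c).cons b
        _ ≡ᵇ b :: a :: c :: b :: a :: U := (equiv_swap hac.symm _).cons b
    · calc Q ≡ᵇ c :: b :: Z := hQ
        _ ≡ᵇ c :: b :: a :: b :: c :: U := ((hZV.trans (hVU.cons a)).cons b).cons c
        _ ≡ᵇ c :: a :: b :: a :: c :: U := (equiv_braid hab.symm _).cons c
        _ ≡ᵇ a :: c :: b :: a :: c :: U := equiv_swap hac.symm _
        _ ≡ᵇ a :: c :: b :: c :: a :: U := (((equiv_swap hac U).cons b).cons c).cons a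
        _ ≡ᵇ a :: b :: c :: b :: a :: U := (equiv_braid hcb _).cons a

theorem braid_head_of_far (ih : FirstLetterBelow L) (hac : Adj a c) (hcb : Far c b)
    (ht : t.length + 1 < L) (h : a :: c :: t ≡ᵇ b :: Z) (hQ : Q ≡ᵇ c :: Z) :
    ThroughLcm a b (c :: a :: t) Q := by
  rcases ih a b (c :: t) Z ht h with ⟨rfl, -⟩ | ⟨hab, Y, htY, hZY⟩ | ⟨hab, Y, htY, hZY⟩
  · exact absurd hcb.symm hac.not_far
  · obtain ⟨V, htV, hYV⟩ := ih.far hcb (by omega) htY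
    refine .of_far hab (c :: a :: V) ?_ ?_
    · calc c :: a :: t ≡ᵇ c :: a :: b :: V := (htV.cons a).cons c
        _ ≡ᵇ c :: b :: a :: V := (equiv_swap hab V).cons c
        _ ≡ᵇ b :: c :: a :: V := equiv_swap hcb _
    · calc Q ≡ᵇ c :: Z := hQ
        _ ≡ᵇ c :: a :: c :: V := (hZY.trans (hYV.cons a)).cons c
        _ ≡ᵇ a :: c :: a :: V := equiv_braid hac.symm V
  · have hY : Y.length < L := by have := htY.length_eq; simp at this; omega
    obtain ⟨V, htV, hYV⟩ := ih.far hcb (by omega) htY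
    obtain ⟨U, hYU, hVU⟩ := ih.adj hac hY hYV
    refine .of_adj hab (c :: a :: b :: U) ?_ ?_
    · calc c :: a :: t ≡ᵇ c :: a :: b :: a :: c :: U := ((htV.trans (hVU.cons b)).cons a).cons c
        _ ≡ᵇ c :: b :: a :: b :: c :: U := (equiv_braid hab _).cons c
        _ ≡ᵇ b :: c :: a :: b :: c :: U := equiv_swap hcb _
        _ ≡ᵇ b :: c :: a :: c :: b :: U := (((equiv_swap hcb.symm U).cons a).cons c).cons b
        _ ≡ᵇ b :: a :: c :: a :: b :: U := (equiv_braid hac.symm _).cons b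
    · calc Q ≡ᵇ c :: Z := hQ
        _ ≡ᵇ c :: a :: b :: c :: a :: U := (hZY.trans ((hYU.cons b).cons a)).cons c
        _ ≡ᵇ c :: a :: c :: b :: a :: U := ((equiv_swap hcb.symm _).cons a).cons c
        _ ≡ᵇ a :: c :: a :: b :: a :: U := equiv_braid hac.symm _
        _ ≡ᵇ a :: c :: b :: a :: b :: U := ((equiv_braid hab U).cons c).cons a
        _ ≡ᵇ a :: b :: c :: a :: b :: U := (equiv_swap hcb _).cons a

theorem braid_head_of_adj (ih : FirstLetterBelow L) (hac : Adj a c) (hcb : Adj c b)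
    (ht : t.length + 1 < L) (h : a :: c :: t ≡ᵇ b :: c :: Z) (hQ : Q ≡ᵇ c :: b :: Z) :
    ThroughLcm a b (c :: a :: t) Q := by
  have hZ : Z.length < L := by have := h.length_eq; simp at this; omega
  rcases ih a b (c :: t) (c :: Z) ht h with ⟨rfl, htZ⟩ | ⟨hab, Y, htY, hZY⟩ | ⟨hab, -⟩
  · exact Or.inl ⟨rfl, (((ih.cancel (by omega) htZ).cons a).cons c).trans hQ.symm⟩
  · obtain ⟨V, htV, hYV⟩ := ih.adj hcb (by omega) htY
    obtain ⟨U, hZU, hYU⟩ := ih.adj hac.symm hZ hZY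
    have hV : V.length + 1 < L := by have := htV.length_eq; simp at this; omega
    obtain ⟨T, hVT, hUT⟩ := ih.far hab.symm (by omega) (ih.cancel hV (hYV.symm.trans hYU))
    refine .of_far hab (c :: b :: a :: c :: T) ?_ ?_
    · calc c :: a :: t ≡ᵇ c :: a :: b :: c :: a :: T :=
            ((htV.trans ((hVT.cons c).cons b)).cons a).cons c
        _ ≡ᵇ c :: b :: a :: c :: a :: T := (equiv_swap hab _).cons c
        _ ≡ᵇ c :: b :: c :: a :: c :: T := ((equiv_braid hac T).cons b).cons c
        _ ≡ᵇ b :: c :: b :: a :: c :: T := equiv_braid hcb _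
    · calc Q ≡ᵇ c :: b :: Z := hQ
        _ ≡ᵇ c :: b :: a :: c :: b :: T := ((hZU.trans ((hUT.cons c).cons a)).cons b).cons c
        _ ≡ᵇ c :: a :: b :: c :: b :: T := (equiv_swap hab.symm _).cons c
        _ ≡ᵇ c :: a :: c :: b :: c :: T := ((equiv_braid hcb.symm T).cons a).cons c
        _ ≡ᵇ a :: c :: a :: b :: c :: T := equiv_braid hac.symm _
        _ ≡ᵇ a :: c :: b :: a :: c :: T := ((equiv_swap hab _).cons c).cons a
  · exact absurd hab (not_adj_of_adj_of_adj hac hcb)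

end FirstLetterBelow

namespace ThroughLcm

variable {L : ℕ} {a b c : ℕ+} {Q t : List ℕ+}

theorem swap_head (ih : FirstLetterBelow L) (hac : Far a c) (ht : t.length < L)
    (h : ThroughLcm c b (a :: t) Q) : ThroughLcm a b (c :: t) Q := by
  rcases h with ⟨rfl, hQ⟩ | ⟨hcb, Z, htZ, hQ⟩ | ⟨hcb, Z, htZ, hQ⟩
  · exact .of_far hac t (.refl _) hQ.symm
  · exact ((ih a b t Z ht htZ).cons_of_far hac.symm hcb).congr (.refl _) hQ
  · exact ih.swap_head_of_adj hac hcb ht htZ hQ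

theorem braid_head (ih : FirstLetterBelow L) (hac : Adj a c) (ht : t.length + 1 < L)
    (h : ThroughLcm c b (a :: c :: t) Q) : ThroughLcm a b (c :: a :: t) Q := by
  rcases h with ⟨rfl, hQ⟩ | ⟨hcb, Z, htZ, hQ⟩ | ⟨hcb, Z, htZ, hQ⟩
  · exact .of_adj hac t (.refl _) hQ.symm
  · exact ih.braid_head_of_far hac hcb ht htZ hQ
  · exact ih.braid_head_of_adj hac hcb ht htZ hQ

end ThroughLcm

theorem firstLetterBelow : ∀ L, FirstLetterBelow L
  | 0 => fun _ _ _ _ hP _ => absurd hP (Nat.not_lt_zero _)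
  | L + 1 => by
    have ih := firstLetterBelow L
    intro a b P Q hP h
    suffices ∀ u, u ≡ᵇ b :: Q → ∀ a P, u = a :: P → P.length < L + 1 → ThroughLcm a b P Q from
      this _ h a P rfl hP
    intro u hu
    induction hu using Relation.ReflTransGen.head_induction_on with
    | refl =>
      rintro a P ⟨⟩ -
      exact Or.inl ⟨rfl, .refl _⟩
    | head hstep _ ihM =>
      rintro a P rfl hP
      cases hstep with
      | cons _ hPP' =>
        exact (ihM a _ rfl (hPP'.length_eq ▸ hP)).congr (.single hPP') (.refl _)
      | swap hac t =>
        exact (ihM _ _ rfl (by simpa using hP)).swap_head ih hac (by simpa using hP)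
      | braid hac t =>
        exact (ihM _ _ rfl (by simpa using hP)).braid_head ih hac (by simpa using hP)

theorem throughLcm_of_equiv {a b : ℕ+} {P Q : List ℕ+} (h : a :: P ≡ᵇ b :: Q) :
    ThroughLcm a b P Q :=
  firstLetterBelow _ a b P Q P.length.lt_succ_self h

theorem exists_equiv_cons_of_append_equiv_cons {i : ℕ+} {u v w : List ℕ+} (hi : i ∉ u)
    (h : u ++ v ≡ᵇ i :: w) : ∃ w', v ≡ᵇ i :: w' := by
  induction u generalizing w with
  | nil => exact ⟨w, h⟩
  | cons a u ih =>
    rw [List.mem_cons, not_or] at hi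
    rcases throughLcm_of_equiv h with ⟨hai, -⟩ | ⟨-, Z, h, -⟩ | ⟨-, Z, h, -⟩
    · exact absurd hai.symm hi.1
    · exact ih hi.2 h
    · exact ih hi.2 h

open FreeMonoid

theorem braidCon_of_step {u v : List ℕ+} (h : Step u v) : braidCon (ofList u) (ofList v) := by
  induction h with
  | @swap a c h t =>
    change braidCon (of a * of c * ofList t) (of c * of a * ofList t)
    refine braidCon.mul ?_ (braidCon.refl (ofList t))
    rcases h with h | h
    · exact ConGen.Rel.of _ _ (Or.inr ⟨a, c, h, rfl, rfl⟩)
    · exact braidCon.symm (ConGen.Rel.of _ _ (Or.inr ⟨c, a, h, rfl, rfl⟩))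
  | @braid a c h t =>
    change braidCon (of a * of c * of a * ofList t) (of c * of a * of c * ofList t)
    refine braidCon.mul ?_ (braidCon.refl (ofList t))
    rcases h with rfl | rfl
    · exact braidCon.symm (ConGen.Rel.of _ _ (Or.inl ⟨a, rfl, rfl⟩))
    · exact ConGen.Rel.of _ _ (Or.inl ⟨c, rfl, rfl⟩)
  | cons a _ ih => exact braidCon.mul (braidCon.refl (of a)) ih

def equivCon : Con (FreeMonoid ℕ+) where
  r u v := u.toList ≡ᵇ v.toList
  iseqv := ⟨fun _ => .refl _, Equiv.symm, Equiv.trans⟩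
  mul' := Equiv.append

theorem braidCon_iff_equiv {u v : List ℕ+} : braidCon (ofList u) (ofList v) ↔ u ≡ᵇ v := by
  refine ⟨fun h => ?_, fun h => ?_⟩
  · refine Con.le_def.mp (Con.conGen_le.mpr ?_ : braidCon ≤ equivCon) h
    rintro _ _ (⟨i, rfl, rfl⟩ | ⟨i, j, hij, rfl, rfl⟩)
    · exact equiv_braid (Or.inr rfl) []
    · exact equiv_swap (Or.inl hij) []
  · induction h with
    | refl => exact braidCon.refl _
    | tail _ hs ih => exact braidCon.trans ih (braidCon_of_step hs)

theorem mk_ofList_eq_iff {u v : List ℕ+} :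
    braidCon.mk' (ofList u) = braidCon.mk' (ofList v) ↔ u ≡ᵇ v :=
  braidCon.eq.trans braidCon_iff_equiv

theorem exists_mk_ofList_eq (β : MB) : ∃ u, braidCon.mk' (ofList u) = β := by
  obtain ⟨u, rfl⟩ := Con.mk'_surjective (c := braidCon) β
  exact ⟨u.toList, rfl⟩

theorem mk_ofList_append (u v : List ℕ+) :
    braidCon.mk' (ofList (u ++ v)) = braidCon.mk' (ofList u) * braidCon.mk' (ofList v) :=
  map_mul _ _ _

theorem exists_eq_braidGen_mul_iff {a : ℕ+} {u : List ℕ+} :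
    (∃ ε, braidCon.mk' (ofList u) = braidGen a * ε) ↔ ∃ w, u ≡ᵇ a :: w := by
  constructor
  · rintro ⟨ε, h⟩
    obtain ⟨w, rfl⟩ := exists_mk_ofList_eq ε
    exact ⟨w, mk_ofList_eq_iff.mp (h.trans (mk_ofList_append [a] w).symm)⟩
  · rintro ⟨w, h⟩
    exact ⟨_, (mk_ofList_eq_iff.mpr h).trans (mk_ofList_append [a] w)⟩

theorem exists_eq_mul_braidGen_mul_of_mem {a : ℕ+} {u : List ℕ+} (h : a ∈ u) :
    ∃ δ ε, braidCon.mk' (ofList u) = δ * braidGen a * ε := by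
  obtain ⟨s, t, rfl⟩ := List.append_of_mem h
  refine ⟨braidCon.mk' (ofList s), braidCon.mk' (ofList t), ?_⟩
  rw [mk_ofList_append, ← List.singleton_append, mk_ofList_append, mul_assoc]
  rfl

end BraidWord

open BraidWord

theorem X_eq_braidGen_toPNat' (i : ℕ) : X i = braidGen i.toPNat' := by
  refine congrArg braidGen (PNat.eq ?_)
  simp only [PNat.mk_coe, Nat.toPNat'_coe]
  split_ifs <;> omega

theorem left_dvd_of_left_dvd_mul_general (n : ℕ) (β γ : MB)
    (h1 : GenDvdL (n - 1) (β * γ)) (h2 : ¬ GenDvd (n - 1) β) :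
    GenDvdL (n - 1) γ := by
  simp only [GenDvdL, GenDvd, X_eq_braidGen_toPNat'] at h1 h2 ⊢
  obtain ⟨u, rfl⟩ := exists_mk_ofList_eq β
  obtain ⟨v, rfl⟩ := exists_mk_ofList_eq γ
  have hu : (n - 1).toPNat' ∉ u := fun h => h2 (exists_eq_mul_braidGen_mul_of_mem h)
  rw [← mk_ofList_append, exists_eq_braidGen_mul_iff] at h1
  obtain ⟨w, hw⟩ := h1
  exact exists_eq_braidGen_mul_iff.mpr (exists_equiv_cons_of_append_equiv_cons hu hw)

/-- Lemma 2.2 a): if `x_{n-1}` left-divides `βγ` and `x_{n-1}` does not divide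
`β`, then `x_{n-1}` left-divides `γ`. -/
theorem left_dvd_of_left_dvd_mul (n : ℕ) (hn : 2 ≤ n) (β γ : MB)
    (h1 : GenDvdL (n - 1) (β * γ)) (h2 : ¬ GenDvd (n - 1) β) :
    GenDvdL (n - 1) γ :=
  left_dvd_of_left_dvd_mul_general n β γ h1 h2
end
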